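/- For all natural numbers h and k there exists a constant c such that the following holds: let G be a graph of highway dimension at most h, let r > 0, let E' be the set of edges of G of weight at least r/3, and let C be an (r/3,k) vertex cover of G. Then C ∪ V(E') is an (r,c)-SPHS of G. -/

import Mathlib

open SimpleGraph

/-- The length (total weight) of a walk under an edge-weight function `w`. -/
noncomputable def wlen {V : Type*} {G : SimpleGraph V} (w : Sym2 V → ℝ) {u v : V}
    (p : G.Walk u v) : ℝ :=
  (p.edges.map w).sum

/-- `p` is a subwalk (subpath) of `q`. -/
def IsSubwalk {V : Type*} {G : SimpleGraph V} {u v a b : V}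
    (p : G.Walk u v) (q : G.Walk a b) : Prop :=
  ∃ (q1 : G.Walk a u) (q2 : G.Walk v b), q = (q1.append p).append q2

/-- Shortest-path distance as the infimum of walk lengths. -/
noncomputable def wdist {V : Type*} (G : SimpleGraph V) (w : Sym2 V → ℝ) (u v : V) : ℝ :=
  sInf {x : ℝ | ∃ p : G.Walk u v, x = wlen w p}

/-- A finite connected positively-weighted graph (all weights at least 1) with
unique shortest paths, in which every edge is the unique shortest path between
its endpoints.  `sp u v` is the unique shortest path from `u` to `v`. -/
structure Setting (V : Type) [Fintype V] where
  G : SimpleGraph V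
  w : Sym2 V → ℝ
  connected : G.Connected
  one_le_w : ∀ e ∈ G.edgeSet, 1 ≤ w e
  sp : ∀ u v : V, G.Walk u v
  sp_isPath : ∀ u v : V, (sp u v).IsPath
  sp_shortest : ∀ (u v : V) (q : G.Walk u v), wlen w (sp u v) ≤ wlen w q
  sp_unique : ∀ (u v : V) (q : G.Walk u v), q.IsPath →
    wlen w q = wlen w (sp u v) → q = sp u v
  edge_sp : ∀ (u v : V) (h : G.Adj u v),
    sp u v = SimpleGraph.Walk.cons h SimpleGraph.Walk.nil

namespace Setting

variable {V : Type} [Fintype V]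

/-- Shortest-path distance `d(u,v)`. -/
noncomputable def d (S : Setting V) (u v : V) : ℝ := wlen S.w (S.sp u v)

/-- The ball `B(v,r)`. -/
def ball (S : Setting V) (v : V) (r : ℝ) : Set V := {u : V | S.d v u ≤ r}

/-- `maxedge(p(u,v)) ≤ r`: every edge of the shortest path has weight at most `r`. -/
def maxedgeLE (S : Setting V) (u v : V) (r : ℝ) : Prop :=
  ∀ e ∈ (S.sp u v).edges, S.w e ≤ r

/-- An `(r,k)` vertex cover. -/
def IsVertexCover (S : Setting V) (r : ℝ) (k : ℕ) (C : Set V) : Prop :=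
  (∀ v1 v2 : V, r < S.d v1 v2 → S.maxedgeLE v1 v2 r →
      ∃ c ∈ C, c ∈ (S.sp v1 v2).support) ∧
  (∀ v : V, (S.ball v (2 * r) ∩ C).ncard ≤ k)

/-- Discrete highway dimension at most `h`. -/
def DiscreteHDLE (S : Setting V) (h : ℕ) : Prop :=
  ∀ (v : V) (r : ℝ), 0 < r →
    ∃ C : Set V, C.ncard ≤ h ∧
      ∀ v1 v2 : V, (∀ x ∈ (S.sp v1 v2).support, x ∈ S.ball v (4 * r)) →
        r < S.d v1 v2 → ∃ c ∈ C, c ∈ (S.sp v1 v2).support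

/-- The (unique) shortest path from `v1` to `v2` is `r`-significant:
it has an `r`-witness. -/
def RSignificant (S : Setting V) (r : ℝ) (v1 v2 : V) : Prop :=
  ∃ a b : V, (a = v1 ∨ S.G.Adj a v1) ∧ (b = v2 ∨ S.G.Adj b v2) ∧
    r ≤ S.d a b ∧ IsSubwalk (S.sp v1 v2) (S.sp a b)

/-- The shortest path from `v1` to `v2` is `(r,2r)`-close to `v`,
i.e. it belongs to `S(v,r)`. -/
def InSvr (S : Setting V) (v : V) (r : ℝ) (v1 v2 : V) : Prop :=
  ∃ a b : V, (a = v1 ∨ S.G.Adj a v1) ∧ (b = v2 ∨ S.G.Adj b v2) ∧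
    r ≤ S.d a b ∧ IsSubwalk (S.sp v1 v2) (S.sp a b) ∧
    ∃ x ∈ (S.sp a b).support, S.d v x ≤ 2 * r

/-- Highway dimension at most `h`. -/
def HighwayDimLE (S : Setting V) (h : ℕ) : Prop :=
  ∀ (r : ℝ), 0 < r → ∀ v : V,
    ∃ C : Set V, C.ncard ≤ h ∧
      ∀ v1 v2 : V, S.InSvr v r v1 v2 → ∃ c ∈ C, c ∈ (S.sp v1 v2).support

/-- An `(r,h')`-SPHS. -/
def IsSPHS (S : Setting V) (r : ℝ) (h' : ℕ) (C : Set V) : Prop :=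
  (∀ v1 v2 : V, S.RSignificant r v1 v2 → ∃ c ∈ C, c ∈ (S.sp v1 v2).support) ∧
  (∀ v : V, (C ∩ S.ball v (2 * r)).ncard ≤ h')

/-- Adjacency in the `r`-shortcut graph `G(C,r)`. -/
def shortcutAdj (S : Setting V) (C : Set V) (r : ℝ) (v1 v2 : V) : Prop :=
  v1 ≠ v2 ∧ v1 ∈ C ∧ v2 ∈ C ∧ S.d v1 v2 ≤ r ∧
    ∀ c ∈ C, c ∈ (S.sp v1 v2).support → c = v1 ∨ c = v2

/-- An `(r,η)` path cover, a set of shortest paths represented by their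
endpoint pairs. -/
def IsPathCover (S : Setting V) (r : ℝ) (η : ℕ) (P : Set (V × V)) : Prop :=
  (∀ q ∈ P, r / 4 ≤ S.d q.1 q.2 ∧ S.d q.1 q.2 ≤ r) ∧
  (∀ v1 v2 : V, r / 2 ≤ S.d v1 v2 → S.d v1 v2 ≤ r → S.maxedgeLE v1 v2 (r / 8) →
    ∃ q ∈ P, IsSubwalk (S.sp q.1 q.2) (S.sp v1 v2) ∧
      S.d v1 q.1 ≤ r / 8 ∧ S.d q.2 v2 ≤ r / 8) ∧
  (∀ v : V, {q ∈ P | ∃ x ∈ (S.sp q.1 q.2).support, S.d v x ≤ 4 * r}.ncard ≤ η)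

/-- A pair of vertices of `Cm` is *considered* at level `i`. -/
def Considered (S : Setting V) (Cm : Set V) (i : ℤ) (q : V × V) : Prop :=
  q.1 ∈ Cm ∧ q.2 ∈ Cm ∧
    3 / 4 * (8 : ℝ) ^ i ≤ S.d q.1 q.2 ∧ S.d q.1 q.2 ≤ (8 : ℝ) ^ i ∧
    S.maxedgeLE q.1 q.2 ((8 : ℝ) ^ (i - 1))

/-- `C'` is a valid output of the greedy construction at level `i` from `Cm`. -/
def ValidGreedy (S : Setting V) (Cm : Set V) (i : ℤ) (C' : Set V) : Prop :=
  ∃ (m : ℕ) (q : Fin m → V × V),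
    Function.Injective q ∧
    (∀ p : V × V, S.Considered Cm i p ↔ ∃ j : Fin m, q j = p) ∧
    ∃ Sc : Fin (m + 1) → Set V,
      Sc 0 = ∅ ∧ Sc (Fin.last m) = C' ∧
      ∀ j : Fin m,
        ((∃ c ∈ Sc j.castSucc, c ∈ (S.sp (q j).1 (q j).2).support) →
          Sc j.succ = Sc j.castSucc) ∧
        ((¬ ∃ c ∈ Sc j.castSucc, c ∈ (S.sp (q j).1 (q j).2).support) →
          ∃ c ∈ Cm, c ∈ (S.sp (q j).1 (q j).2).support ∧
            (∀ c' ∈ Cm, c' ∈ (S.sp (q j).1 (q j).2).support →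
              |S.d (q j).1 c - S.d (q j).1 (q j).2 / 2| ≤
                |S.d (q j).1 c' - S.d (q j).1 (q j).2 / 2|) ∧
            Sc j.succ = insert c (Sc j.castSucc))

/-- The set of endpoints of edges of weight greater than `t`. -/
def bigEdgeEnds (S : Setting V) (t : ℝ) : Set V :=
  {x : V | ∃ e ∈ S.G.edgeSet, t < S.w e ∧ x ∈ e}

end Setting

section Aux

open SimpleGraph

variable {V : Type} [Fintype V]

lemma wlen_append' {G : SimpleGraph V} (w : Sym2 V → ℝ) {u v x : V}
    (p : G.Walk u v) (q : G.Walk v x) :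
    wlen w (p.append q) = wlen w p + wlen w q := by
  simp [wlen, SimpleGraph.Walk.edges_append]

lemma wlen_cons' {G : SimpleGraph V} (w : Sym2 V → ℝ) {u v x : V}
    (h : G.Adj u v) (p : G.Walk v x) :
    wlen w (SimpleGraph.Walk.cons h p) = w s(u, v) + wlen w p := by
  simp [wlen, SimpleGraph.Walk.edges_cons]

lemma endpoint_helper {G : SimpleGraph V} {u v : V} (p : G.Walk u v) :
    ∀ e ∈ p.edges, ∃ x y : V, e = s(x, y) ∧ x ∈ p.support := by
  intro e
  induction e using Sym2.ind with
  | _ x y => exact fun he => ⟨x, y, rfl, p.fst_mem_support_of_mem_edges he⟩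

lemma ncard_biUnion_le' {α β : Type} [Fintype α] (Z : Finset β) (g : β → Set α) :
    (⋃ z ∈ Z, g z).ncard ≤ ∑ z ∈ Z, (g z).ncard := by
  classical
  induction Z using Finset.induction_on with
  | empty => simp
  | @insert a Z ha ih =>
    rw [Finset.set_biUnion_insert, Finset.sum_insert ha]
    exact le_trans (Set.ncard_union_le _ _) (Nat.add_le_add_left ih _)

namespace Setting

variable (S : Setting V)

lemma d_eq {u v : V} : S.d u v = wlen S.w (S.sp u v) := rfl

lemma wlen_nonneg {u v : V} (p : S.G.Walk u v) : 0 ≤ wlen S.w p := by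
  apply List.sum_nonneg
  intro x hx
  obtain ⟨e, he, rfl⟩ := List.mem_map.mp hx
  exact le_trans zero_le_one (S.one_le_w e (p.edges_subset_edgeSet he))

lemma d_le {u v : V} (q : S.G.Walk u v) : S.d u v ≤ wlen S.w q := S.sp_shortest u v q

lemma sp_self (u : V) : S.sp u u = SimpleGraph.Walk.nil :=
  SimpleGraph.Walk.isPath_iff_eq_nil.mp (S.sp_isPath u u)

lemma d_self (u : V) : S.d u u = 0 := by
  rw [d_eq, S.sp_self]; simp [wlen]

/-- Splitting a shortest path at an interior vertex. -/
lemma split2 {a b u : V} (p : S.G.Walk a u) (q : S.G.Walk u b)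
    (hEq : S.sp a b = p.append q) :
    wlen S.w p = S.d a u ∧ wlen S.w q = S.d u b ∧ S.d a b = S.d a u + S.d u b := by
  have h1 : S.d a u ≤ wlen S.w p := S.d_le p
  have h2 : S.d u b ≤ wlen S.w q := S.d_le q
  have h3 : S.d a b ≤ S.d a u + S.d u b := by
    have := S.d_le ((S.sp a u).append (S.sp u b))
    rwa [wlen_append'] at this
  have h4 : S.d a b = wlen S.w p + wlen S.w q := by
    rw [d_eq, hEq, wlen_append']
  exact ⟨by linarith, by linarith, by linarith⟩

lemma d_edge {u v : V} (hadj : S.G.Adj u v) : S.d u v = S.w s(u, v) := by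
  rw [d_eq, S.edge_sp u v hadj, wlen_cons']
  simp [wlen]

/-- Finding the first edge of a walk crossing a predicate. -/
lemma exists_cross (P : V → Prop) [DecidablePred P] :
    ∀ {a x : V} (p : S.G.Walk a x), ¬ P a → P x →
      ∃ (y u1 : V) (hadj : S.G.Adj y u1) (q1 : S.G.Walk a y) (q2 : S.G.Walk u1 x),
        p = q1.append (SimpleGraph.Walk.cons hadj q2) ∧ ¬ P y ∧ P u1 := by
  intro a x p
  induction p with
  | nil => intro hna hx; exact absurd hx hna
  | @cons a b x hadj q ih =>
    intro hna hx
    by_cases hPb : P b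
    · exact ⟨a, b, hadj, SimpleGraph.Walk.nil, q, by simp, hna, hPb⟩
    · obtain ⟨y, u1, hadj', q1, q2, hdec, hy, hu1⟩ := ih hPb hx
      exact ⟨y, u1, hadj', SimpleGraph.Walk.cons hadj q1, q2,
        by rw [hdec, SimpleGraph.Walk.cons_append], hy, hu1⟩

/-- Progress lemma: a hitting set for `S(z,ρ)` contains a vertex on the
shortest path from `z` to a far vertex `x`, at distance at least `ρ` from `z`. -/
lemma progress {ρ : ℝ} (hρ : 0 < ρ) {z x : V} (hzx : 2 * ρ < S.d z x)
    (H : Set V)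
    (hH : ∀ v1 v2 : V, S.InSvr z ρ v1 v2 → ∃ c ∈ H, c ∈ (S.sp v1 v2).support) :
    ∃ c ∈ H, ρ ≤ S.d z c ∧ S.d z c + S.d c x = S.d z x := by
  classical
  have hPz : ¬ ρ ≤ S.d z z := by rw [S.d_self]; linarith
  have hPx : ρ ≤ S.d z x := by linarith
  obtain ⟨y, u1, hadj, q1, q2, hdec, hy, hu1⟩ :=
    S.exists_cross (fun u => ρ ≤ S.d z u) (S.sp z x) hPz hPx
  simp only [not_le] at hy
  have hdec2 : S.sp z x =
      (q1.append (SimpleGraph.Walk.cons hadj SimpleGraph.Walk.nil)).append q2 := by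
    rw [hdec, ← SimpleGraph.Walk.append_assoc, SimpleGraph.Walk.cons_nil_append]
  obtain ⟨hw1, hw2, hsum⟩ := S.split2 _ _ hdec
  obtain ⟨hw1', hw2', hsum'⟩ := S.split2 _ _ hdec2
  have hq2path : q2.IsPath := by
    have hp := S.sp_isPath z x
    rw [hdec] at hp
    exact ((SimpleGraph.Walk.cons_isPath_iff _ _).mp hp.of_append_right).1
  have hq2sp : q2 = S.sp u1 x := S.sp_unique u1 x q2 hq2path (by rw [hw2']; rfl)
  have hcpath : (SimpleGraph.Walk.cons hadj q2).IsPath := by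
    have hp := S.sp_isPath z x
    rw [hdec] at hp
    exact hp.of_append_right
  have hcsp : SimpleGraph.Walk.cons hadj q2 = S.sp y x :=
    S.sp_unique y x _ hcpath (by rw [hw2]; rfl)
  have hInS : S.InSvr z ρ u1 x := by
    refine ⟨y, x, Or.inr hadj, Or.inl rfl, by linarith, ?_, ?_⟩
    · refine ⟨SimpleGraph.Walk.cons hadj SimpleGraph.Walk.nil, SimpleGraph.Walk.nil, ?_⟩
      rw [← hcsp, ← hq2sp]
      simp
    · exact ⟨y, SimpleGraph.Walk.start_mem_support _, by linarith⟩
  obtain ⟨c, hcH, hcsupp⟩ := hH u1 x hInS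
  rw [← hq2sp] at hcsupp
  obtain ⟨t1, t2, ht⟩ := SimpleGraph.Walk.mem_support_iff_exists_append.mp hcsupp
  have hdec3 : S.sp z x = (q1.append (SimpleGraph.Walk.cons hadj t1)).append t2 := by
    rw [hdec, ht, ← SimpleGraph.Walk.cons_append, SimpleGraph.Walk.append_assoc]
  obtain ⟨hA, hB, hC⟩ := S.split2 _ _ hdec3
  refine ⟨c, hcH, ?_, by linarith⟩
  have h5 : wlen S.w (q1.append (SimpleGraph.Walk.cons hadj t1)) =
      wlen S.w q1 + S.w s(y, u1) + wlen S.w t1 := by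
    rw [wlen_append', wlen_cons']; ring
  have h6 : wlen S.w (q1.append (SimpleGraph.Walk.cons hadj SimpleGraph.Walk.nil)) =
      wlen S.w q1 + S.w s(y, u1) := by
    rw [wlen_append', wlen_cons']; simp [wlen]
  have h7 : 0 ≤ wlen S.w t1 := S.wlen_nonneg t1
  have h8 : S.d z c = wlen S.w q1 + S.w s(y, u1) + wlen S.w t1 := by rw [← hA, h5]
  have h9 : S.d z u1 = wlen S.w q1 + S.w s(y, u1) := by rw [← hw1', h6]
  have hρu1 : ρ ≤ S.d z u1 := hu1
  linarith

/-- Covering the ball `B(v,2r)` by a bounded number of balls of radius `2r/3`. -/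
lemma cover {hh : ℕ} {r : ℝ} (hr : 0 < r) (Hset : V → Set V)
    (hcard : ∀ z, (Hset z).ncard ≤ hh)
    (hhit : ∀ z v1 v2 : V, S.InSvr z (r / 3) v1 v2 →
      ∃ c ∈ Hset z, c ∈ (S.sp v1 v2).support) (v : V) :
    ∃ Z : Finset V, Z.card ≤ (hh + 1) ^ 4 ∧
      ∀ x : V, S.d v x ≤ 2 * r → ∃ z ∈ Z, S.d z x ≤ 2 * (r / 3) := by
  classical
  have hρ : 0 < r / 3 := by linarith
  have key : ∀ j : ℕ, ∃ Z : Finset V, Z.card ≤ (hh + 1) ^ j ∧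
      ∀ x : V, S.d v x ≤ 2 * r →
        ∃ z ∈ Z, S.d z x ≤ 2 * (r / 3) ∨ S.d z x ≤ 2 * r - j * (r / 3) := by
    intro j
    induction j with
    | zero =>
      refine ⟨{v}, by simp, fun x hx => ⟨v, Finset.mem_singleton_self v, Or.inr ?_⟩⟩
      push_cast
      linarith
    | succ j ih =>
      obtain ⟨Z, hZc, hZ⟩ := ih
      set F : V → Finset V := fun z => (Set.toFinite (Hset z)).toFinset with hF
      refine ⟨Z ∪ Z.biUnion F, ?_, ?_⟩
      · have hFc : ∀ z ∈ Z, (F z).card ≤ hh := by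
          intro z _
          show ((Set.toFinite (Hset z)).toFinset).card ≤ hh
          rw [← Set.ncard_eq_toFinset_card (Hset z) (Set.toFinite (Hset z))]
          exact hcard z
        have h1 : (Z.biUnion F).card ≤ Z.card * hh :=
          Finset.card_biUnion_le_card_mul _ _ _ hFc
        calc (Z ∪ Z.biUnion F).card ≤ Z.card + (Z.biUnion F).card :=
              Finset.card_union_le _ _
          _ ≤ (hh + 1) ^ j + (hh + 1) ^ j * hh := by
              exact Nat.add_le_add hZc (le_trans h1 (Nat.mul_le_mul_right hh hZc))
          _ = (hh + 1) ^ (j + 1) := by ring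
      · intro x hx
        obtain ⟨z, hzZ, hcase⟩ := hZ x hx
        rcases hcase with hnear | hfar
        · exact ⟨z, Finset.mem_union_left _ hzZ, Or.inl hnear⟩
        · by_cases hnear : S.d z x ≤ 2 * (r / 3)
          · exact ⟨z, Finset.mem_union_left _ hzZ, Or.inl hnear⟩
          · push_neg at hnear
            obtain ⟨c, hcH, hρc, hsum⟩ := S.progress hρ hnear (Hset z) (hhit z)
            refine ⟨c, Finset.mem_union_right _ (Finset.mem_biUnion.mpr
              ⟨z, hzZ, by rw [hF]; exact (Set.Finite.mem_toFinset _).mpr hcH⟩), Or.inr ?_⟩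
            push_cast
            push_cast at hfar
            linarith
  obtain ⟨Z, hZc, hZ⟩ := key 4
  refine ⟨Z, hZc, fun x hx => ?_⟩
  obtain ⟨z, hzZ, hcase⟩ := hZ x hx
  refine ⟨z, hzZ, ?_⟩
  rcases hcase with hc | hc
  · exact hc
  · push_cast at hc
    linarith

end Setting

end Aux
/-- An `(r/3,k)` vertex cover together with the endpoints of
edges of weight at least `r/3` gives an `(r,c)`-SPHS. -/
theorem stmt7 (h k : ℕ) :
    ∃ c : ℕ, ∀ (V : Type) [Fintype V] (S : Setting V), S.HighwayDimLE h →
      ∀ r : ℝ, 0 < r → ∀ C : Set V, S.IsVertexCover (r / 3) k C →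
        S.IsSPHS r c
          (C ∪ {x : V | ∃ e ∈ S.G.edgeSet, r / 3 ≤ S.w e ∧ x ∈ e}) := by
  classical
  refine ⟨(h + 1) ^ 4 * (k + h), ?_⟩
  intro V _ S hHD r hr C hVC
  have hr3 : 0 < r / 3 := by linarith
  obtain ⟨Hset, hcard, hhit⟩ : ∃ Hset : V → Set V, (∀ z, (Hset z).ncard ≤ h) ∧
      ∀ z v1 v2 : V, S.InSvr z (r / 3) v1 v2 → ∃ c ∈ Hset z, c ∈ (S.sp v1 v2).support := by
    have hz := fun z : V => hHD (r / 3) hr3 z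
    choose Hset h1 h2 using hz
    exact ⟨Hset, h1, h2⟩
  constructor
  · -- hitting condition
    intro v1 v2 hsig
    obtain ⟨a, b, ha, hb, hdab, q1, q2, heq⟩ := hsig
    by_cases hbig : ∃ e ∈ (S.sp v1 v2).edges, r / 3 ≤ S.w e
    · obtain ⟨e, he, hwe⟩ := hbig
      obtain ⟨xx, yy, rfl, hxs⟩ := endpoint_helper (S.sp v1 v2) e he
      exact ⟨xx, Set.mem_union_right _
        ⟨s(xx, yy), (S.sp v1 v2).edges_subset_edgeSet he, hwe, Sym2.mem_mk_left _ _⟩, hxs⟩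
    · push_neg at hbig
      have hmax : S.maxedgeLE v1 v2 (r / 3) := fun e he => le_of_lt (hbig e he)
      by_cases hfar : r / 3 < S.d v1 v2
      · obtain ⟨c, hcC, hcs⟩ := hVC.1 v1 v2 hfar hmax
        exact ⟨c, Set.mem_union_left _ hcC, hcs⟩
      · push_neg at hfar
        have heq' : S.sp a b = q1.append ((S.sp v1 v2).append q2) := by
          rw [heq, SimpleGraph.Walk.append_assoc]
        obtain ⟨hw1, hw2, hsum⟩ := S.split2 _ _ heq'
        obtain ⟨hw1', hw2', hsum'⟩ := S.split2 _ _ heq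
        have hmid : S.d v1 b = S.d v1 v2 + S.d v2 b := by
          rw [← hw2, wlen_append', ← Setting.d_eq, hw2']
        by_cases hc1 : r / 3 ≤ S.d a v1
        · have hne : a ≠ v1 := by
            intro hEq
            rw [hEq, S.d_self] at hc1
            linarith
          have hadj : S.G.Adj a v1 := ha.resolve_left hne
          refine ⟨v1, Set.mem_union_right _
            ⟨s(a, v1), S.G.mem_edgeSet.mpr hadj, ?_, Sym2.mem_mk_right _ _⟩,
            (S.sp v1 v2).start_mem_support⟩
          rw [← S.d_edge hadj]
          exact hc1
        · push_neg at hc1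
          have hc2 : r / 3 ≤ S.d v2 b := by linarith
          have hne : b ≠ v2 := by
            intro hEq
            rw [hEq, S.d_self] at hc2
            linarith
          have hadj : S.G.Adj v2 b := (hb.resolve_left hne).symm
          refine ⟨v2, Set.mem_union_right _
            ⟨s(v2, b), S.G.mem_edgeSet.mpr hadj, ?_, Sym2.mem_mk_left _ _⟩,
            (S.sp v1 v2).end_mem_support⟩
          rw [← S.d_edge hadj]
          exact hc2
  · -- sparsity condition
    intro v
    obtain ⟨Z, hZcard, hZcover⟩ := S.cover hr Hset hcard hhit v
    set W : Set V := {x : V | ∃ e ∈ S.G.edgeSet, r / 3 ≤ S.w e ∧ x ∈ e} with hWdef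
    have hsub : (C ∪ W) ∩ S.ball v (2 * r) ⊆
        ⋃ z ∈ Z, ((C ∩ S.ball z (2 * (r / 3))) ∪ Hset z) := by
      rintro x ⟨hxCW, hxb⟩
      obtain ⟨z, hzZ, hzx⟩ := hZcover x hxb
      refine Set.mem_biUnion hzZ ?_
      rcases hxCW with hxC | hxW
      · exact Or.inl ⟨hxC, hzx⟩
      · right
        obtain ⟨e, heE, hwe, hxe⟩ := hxW
        obtain ⟨y, rfl⟩ := Sym2.mem_iff_exists.mp hxe
        have hadj : S.G.Adj x y := S.G.mem_edgeSet.mp heE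
        have hInS : S.InSvr z (r / 3) x x := by
          refine ⟨x, y, Or.inl rfl, Or.inr hadj.symm, ?_, ?_,
            ⟨x, SimpleGraph.Walk.start_mem_support _, hzx⟩⟩
          · rw [S.d_edge hadj]; exact hwe
          · refine ⟨SimpleGraph.Walk.nil, S.sp x y, ?_⟩
            rw [S.sp_self]
            simp
        obtain ⟨c, hcH, hcs⟩ := hhit z x x hInS
        rw [S.sp_self] at hcs
        simp only [SimpleGraph.Walk.support_nil, List.mem_singleton] at hcs
        rwa [← hcs]
    have h1 := Set.ncard_le_ncard hsub (Set.toFinite _)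
    have h2 := ncard_biUnion_le' Z (fun z => (C ∩ S.ball z (2 * (r / 3))) ∪ Hset z)
    have h3 : ∀ z ∈ Z, ((C ∩ S.ball z (2 * (r / 3))) ∪ Hset z).ncard ≤ k + h := by
      intro z _
      refine le_trans (Set.ncard_union_le _ _) (Nat.add_le_add ?_ (hcard z))
      rw [Set.inter_comm]
      exact hVC.2 z
    have h4 : ∑ z ∈ Z, ((C ∩ S.ball z (2 * (r / 3))) ∪ Hset z).ncard ≤ Z.card * (k + h) := by
      calc ∑ z ∈ Z, ((C ∩ S.ball z (2 * (r / 3))) ∪ Hset z).ncard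
          ≤ ∑ _z ∈ Z, (k + h) := Finset.sum_le_sum h3
        _ = Z.card * (k + h) := by rw [Finset.sum_const, smul_eq_mul]
    have h5 : Z.card * (k + h) ≤ (h + 1) ^ 4 * (k + h) :=
      Nat.mul_le_mul_right _ hZcard
    omega
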